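/- arXiv:1807.04852 — 5 statements merged into one kernel-verified Lean document; each statement's English description precedes it below -/
import Mathlib

section
/- Let N be a positive integer, let α > 2 be real, and let z > 0. Then the improper integral ∫₀^∞ (1 − (1 + z·v^{−α})^{−N}) v dv converges and equals (z^{2/α}/2) · Γ(1 − 2/α)Γ(N + 2/α)/Γ(N). -/
open MeasureTheory Real

open Set Filter

lemma aux_nonneg (N : ℕ) {w : ℝ} (hw : 0 ≤ w) : 0 ≤ 1 - ((1 + w) ^ N)⁻¹ := by
  have h1 : (1:ℝ) ≤ (1 + w) ^ N := one_le_pow₀ (by linarith)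
  have := inv_le_one_of_one_le₀ h1
  linarith

lemma aux_le_one (N : ℕ) {w : ℝ} (hw : 0 ≤ w) : 1 - ((1 + w) ^ N)⁻¹ ≤ 1 := by
  have h1 : (0:ℝ) < (1 + w) ^ N := by positivity
  have := inv_pos.mpr h1
  linarith

lemma aux_le_mul (N : ℕ) {w : ℝ} (hw : 0 ≤ w) : 1 - ((1 + w) ^ N)⁻¹ ≤ N * w := by
  have hw1 : (0:ℝ) < 1 + w := by linarith
  set y : ℝ := (1 + w)⁻¹ with hy
  have hy0 : 0 < y := inv_pos.mpr hw1
  have hkey : 1 + (N:ℝ) * (y - 1) ≤ y ^ N := by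
    have := one_add_mul_le_pow (a := y - 1) (by linarith) N
    simpa using this
  have hinv : ((1 + w) ^ N)⁻¹ = y ^ N := by rw [hy, inv_pow]
  have h2 : 1 - y ^ N ≤ (N:ℝ) * (1 - y) := by linarith
  have h3 : 1 - y = w * y := by
    have h' : y * (1 + w) = 1 := by rw [hy]; exact inv_mul_cancel₀ hw1.ne'
    linear_combination -h'
  have h4 : (N:ℝ) * (w * y) ≤ N * w := by
    have hyle : y ≤ 1 := by
      rw [hy]; exact inv_le_one_of_one_le₀ (by linarith)
    have : w * y ≤ w * 1 := by nlinarith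
    have hN0 : (0:ℝ) ≤ N := Nat.cast_nonneg N
    nlinarith
  rw [hinv]
  calc 1 - y ^ N ≤ (N:ℝ) * (1 - y) := h2
    _ = (N:ℝ) * (w * y) := by rw [h3]
    _ ≤ N * w := h4

lemma integrableOn_rpow_Ioc {r : ℝ} (h : -1 < r) :
    IntegrableOn (fun t : ℝ => t ^ r) (Ioc (0:ℝ) 1) := by
  have h2 : IntervalIntegrable (fun x : ℝ => x ^ r) volume 0 1 :=
    intervalIntegral.intervalIntegrable_rpow' h
  rwa [intervalIntegrable_iff_integrableOn_Ioc_of_le (by norm_num)] at h2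

lemma beta_contOn {a b : ℝ} :
    ContinuousOn (fun t : ℝ => t ^ (a - 1) * (1 + t) ^ (-(a + b))) (Ioi (0:ℝ)) := by
  intro t ht
  have ht0 : (0:ℝ) < t := ht
  exact ((Real.continuousAt_rpow_const t (a-1) (Or.inl ht0.ne')).continuousWithinAt.mul
    (((continuous_const.add continuous_id).continuousAt (x := t)).continuousWithinAt.rpow_const
      (Or.inl (ne_of_gt (by show (0:ℝ) < 1 + t; linarith)))))

lemma beta_integrableOn {a b : ℝ} (ha : 0 < a) (hb : 0 < b) :
    IntegrableOn (fun t : ℝ => t ^ (a - 1) * (1 + t) ^ (-(a + b))) (Ioi (0:ℝ)) := by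
  rw [← Ioc_union_Ioi_eq_Ioi (zero_le_one (α := ℝ)), integrableOn_union]
  constructor
  · apply Integrable.mono' (g := fun t : ℝ => t ^ (a - 1)) (integrableOn_rpow_Ioc (by linarith))
    · exact (beta_contOn.mono Ioc_subset_Ioi_self).aestronglyMeasurable measurableSet_Ioc
    · filter_upwards [ae_restrict_mem measurableSet_Ioc] with t ht
      have ht0 : (0:ℝ) < t := ht.1
      have h1 : (1 + t) ^ (-(a + b)) ≤ 1 :=
        Real.rpow_le_one_of_one_le_of_nonpos (by linarith) (by linarith)
      have h2 : (0:ℝ) ≤ t ^ (a-1) := Real.rpow_nonneg ht0.le _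
      rw [Real.norm_eq_abs, abs_of_nonneg (by positivity)]
      nlinarith [Real.rpow_nonneg (by linarith : (0:ℝ) ≤ 1 + t) (-(a+b))]
  · apply Integrable.mono' (g := fun t : ℝ => t ^ (-b - 1))
      (integrableOn_Ioi_rpow_of_lt (by linarith) one_pos)
    · exact (beta_contOn.mono (Ioi_subset_Ioi zero_le_one)).aestronglyMeasurable measurableSet_Ioi
    · filter_upwards [ae_restrict_mem measurableSet_Ioi] with t ht
      have ht1 : (1:ℝ) < t := ht
      have ht0 : (0:ℝ) < t := by linarith
      rw [Real.norm_eq_abs, abs_of_nonneg (by positivity)]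
      have h1 : (1 + t) ^ (-(a + b)) ≤ t ^ (-(a + b)) :=
        Real.rpow_le_rpow_of_nonpos ht0 (by linarith) (by linarith)
      calc t ^ (a-1) * (1 + t) ^ (-(a + b)) ≤ t ^ (a-1) * t ^ (-(a + b)) := by
            have := Real.rpow_nonneg ht0.le (a-1); nlinarith
        _ = t ^ (-b - 1) := by rw [← Real.rpow_add ht0]; ring_nf

lemma K_contOn (N : ℕ) {s : ℝ} :
    ContinuousOn (fun w : ℝ => (1 - ((1 + w) ^ N)⁻¹) * w ^ (-1 - s)) (Ioi (0:ℝ)) := by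
  intro w hw
  have hw0 : (0:ℝ) < w := hw
  have h1 : ContinuousAt (fun w : ℝ => 1 - ((1 + w) ^ N)⁻¹) w := by
    have : ContinuousAt (fun w : ℝ => (1 + w) ^ N) w :=
      ((continuous_const.add continuous_id).pow N).continuousAt
    exact continuousAt_const.sub (this.inv₀ (by positivity))
  exact (h1.continuousWithinAt.mul
    ((Real.continuousAt_rpow_const w (-1 - s) (Or.inl hw0.ne')).continuousWithinAt))

lemma K_integrableOn (N : ℕ) {s : ℝ} (hs0 : 0 < s) (hs1 : s < 1) :
    IntegrableOn (fun w : ℝ => (1 - ((1 + w) ^ N)⁻¹) * w ^ (-1 - s)) (Ioi (0:ℝ)) := by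
  rw [← Ioc_union_Ioi_eq_Ioi (zero_le_one (α := ℝ)), integrableOn_union]
  refine ⟨?_, ?_⟩
  · apply Integrable.mono' (g := fun w : ℝ => (N:ℝ) * w ^ (-s))
      ((integrableOn_rpow_Ioc (by linarith)).const_mul _)
    · exact ((K_contOn N).mono Ioc_subset_Ioi_self).aestronglyMeasurable measurableSet_Ioc
    · filter_upwards [ae_restrict_mem measurableSet_Ioc] with w hw
      have hw0 : (0:ℝ) < w := hw.1
      have hnn : (0:ℝ) ≤ 1 - ((1 + w) ^ N)⁻¹ := aux_nonneg N hw0.le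
      have hrp : (0:ℝ) ≤ w ^ (-1 - s) := Real.rpow_nonneg hw0.le _
      rw [Real.norm_eq_abs, abs_of_nonneg (by positivity)]
      have h1 : 1 - ((1 + w) ^ N)⁻¹ ≤ (N:ℝ) * w := aux_le_mul N hw0.le
      calc (1 - ((1 + w) ^ N)⁻¹) * w ^ (-1 - s) ≤ ((N:ℝ) * w) * w ^ (-1 - s) := by nlinarith
        _ = (N:ℝ) * w ^ (-s) := by
            rw [mul_assoc]
            congr 1
            have h2 : w * w ^ (-1 - s) = w ^ (1 + (-1 - s)) := by
              rw [Real.rpow_add hw0, Real.rpow_one]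
            rw [h2]; ring_nf
  · apply Integrable.mono' (g := fun w : ℝ => w ^ (-1 - s))
      (integrableOn_Ioi_rpow_of_lt (by linarith) one_pos)
    · exact ((K_contOn N).mono (Ioi_subset_Ioi zero_le_one)).aestronglyMeasurable measurableSet_Ioi
    · filter_upwards [ae_restrict_mem measurableSet_Ioi] with w hw
      have hw0 : (0:ℝ) < w := lt_trans one_pos hw
      have hnn := aux_nonneg N hw0.le
      have hle := aux_le_one N hw0.le
      have hrp : (0:ℝ) ≤ w ^ (-1 - s) := Real.rpow_nonneg hw0.le _
      rw [Real.norm_eq_abs, abs_of_nonneg (by positivity)]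
      nlinarith

lemma main_contOn (N : ℕ) {α z : ℝ} (hz : 0 < z) :
    ContinuousOn (fun v : ℝ => (1 - ((1 + z * v ^ (-α)) ^ N)⁻¹) * v) (Ioi (0:ℝ)) := by
  intro v hv
  have hv0 : (0:ℝ) < v := hv
  have hb : ContinuousAt (fun v : ℝ => 1 + z * v ^ (-α)) v :=
    continuousAt_const.add (continuousAt_const.mul
      (Real.continuousAt_rpow_const v (-α) (Or.inl hv0.ne')))
  have hpos : (0:ℝ) < 1 + z * v ^ (-α) := by positivity
  have h1 : ContinuousAt (fun v : ℝ => 1 - ((1 + z * v ^ (-α)) ^ N)⁻¹) v :=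
    continuousAt_const.sub ((hb.pow N).inv₀ (pow_ne_zero N hpos.ne'))
  exact h1.continuousWithinAt.mul continuousAt_id.continuousWithinAt

lemma main_integrableOn (N : ℕ) {α z : ℝ} (hα : 2 < α) (hz : 0 < z) :
    IntegrableOn (fun v : ℝ => (1 - ((1 + z * v ^ (-α)) ^ N)⁻¹) * v) (Ioi (0:ℝ)) := by
  rw [← Ioc_union_Ioi_eq_Ioi (zero_le_one (α := ℝ)), integrableOn_union]
  refine ⟨?_, ?_⟩
  · apply Integrable.mono' (g := fun _ : ℝ => (1:ℝ))
      (integrableOn_const measure_Ioc_lt_top.ne)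
    · exact ((main_contOn N hz).mono Ioc_subset_Ioi_self).aestronglyMeasurable measurableSet_Ioc
    · filter_upwards [ae_restrict_mem measurableSet_Ioc] with v hv
      have hv0 : (0:ℝ) < v := hv.1
      have harg : (0:ℝ) ≤ z * v ^ (-α) := by positivity
      have hnn := aux_nonneg N harg
      have hle := aux_le_one N harg
      rw [Real.norm_eq_abs, abs_of_nonneg (by positivity)]
      nlinarith [hv.2]
  · apply Integrable.mono' (g := fun v : ℝ => ((N:ℝ) * z) * v ^ (1 - α))
      ((integrableOn_Ioi_rpow_of_lt (by linarith) one_pos).const_mul _)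
    · exact ((main_contOn N hz).mono (Ioi_subset_Ioi zero_le_one)).aestronglyMeasurable
        measurableSet_Ioi
    · filter_upwards [ae_restrict_mem measurableSet_Ioi] with v hv
      have hv0 : (0:ℝ) < v := lt_trans one_pos hv
      have harg : (0:ℝ) ≤ z * v ^ (-α) := by positivity
      have hnn := aux_nonneg N harg
      have hle : 1 - ((1 + z * v ^ (-α)) ^ N)⁻¹ ≤ (N:ℝ) * (z * v ^ (-α)) := aux_le_mul N harg
      rw [Real.norm_eq_abs, abs_of_nonneg (by positivity)]
      calc (1 - ((1 + z * v ^ (-α)) ^ N)⁻¹) * v ≤ ((N:ℝ) * (z * v ^ (-α))) * v := by nlinarith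
        _ = ((N:ℝ) * z) * v ^ (1 - α) := by
            have h2 : v ^ (-α) * v = v ^ (-α + 1) := by
              rw [Real.rpow_add hv0, Real.rpow_one]
            have h3 : -α + 1 = 1 - α := by ring
            rw [mul_assoc ((N:ℝ)) z, mul_assoc, mul_assoc, h2, h3]

lemma realBeta_Ioo {a b : ℝ} (ha : 0 < a) (hb : 0 < b) :
    ∫ x in Ioo (0:ℝ) 1, x ^ (a - 1) * (1 - x) ^ (b - 1) =
      Real.Gamma a * Real.Gamma b / Real.Gamma (a + b) := by
  have hab : (0:ℝ) < Real.Gamma (a + b) := Real.Gamma_pos_of_pos (by linarith)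
  have hC := Complex.Gamma_mul_Gamma_eq_betaIntegral
    (s := (a:ℂ)) (t := (b:ℂ)) (by simpa using ha) (by simpa using hb)
  have hB : Complex.betaIntegral (a:ℂ) (b:ℂ) =
      ((∫ x in Ioo (0:ℝ) 1, x ^ (a - 1) * (1 - x) ^ (b - 1) : ℝ) : ℂ) := by
    rw [Complex.betaIntegral, intervalIntegral.integral_of_le (by norm_num : (0:ℝ) ≤ 1),
      MeasureTheory.integral_Ioc_eq_integral_Ioo]
    have hcoe : ((∫ x in Ioo (0:ℝ) 1, x ^ (a - 1) * (1 - x) ^ (b - 1) : ℝ) : ℂ) =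
        ∫ x in Ioo (0:ℝ) 1, ((x ^ (a - 1) * (1 - x) ^ (b - 1) : ℝ) : ℂ) :=
      (integral_ofReal (𝕜 := ℂ)).symm
    rw [hcoe]
    apply setIntegral_congr_fun measurableSet_Ioo
    intro x hx
    have hx0 : (0:ℝ) ≤ x := hx.1.le
    have hx1 : (0:ℝ) ≤ 1 - x := by linarith [hx.2]
    simp only [Complex.ofReal_mul]
    rw [Complex.ofReal_cpow hx0, Complex.ofReal_cpow hx1]
    push_cast
    ring
  rw [hB, ← Complex.ofReal_add, Complex.Gamma_ofReal, Complex.Gamma_ofReal,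
    Complex.Gamma_ofReal, ← Complex.ofReal_mul, ← Complex.ofReal_mul] at hC
  have h2 := Complex.ofReal_inj.mp hC
  field_simp
  linarith [h2]

lemma beta_Ioi_eq {a b : ℝ} (ha : 0 < a) (hb : 0 < b) :
    ∫ t in Ioi (0:ℝ), t ^ (a - 1) * (1 + t) ^ (-(a + b)) =
      Real.Gamma a * Real.Gamma b / Real.Gamma (a + b) := by
  set f : ℝ → ℝ := fun x => x / (1 - x) with hf
  set f' : ℝ → ℝ := fun x => ((1 - x) ^ 2)⁻¹ with hf'
  have hderiv : ∀ x ∈ Ioo (0:ℝ) 1, HasDerivWithinAt f (f' x) (Ioo (0:ℝ) 1) x := by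
    intro x hx
    have hx1 : 1 - x ≠ 0 := by have := hx.2; intro h; linarith [sub_eq_zero.mp h]
    have : HasDerivAt f ((1 * (1 - x) - x * (0 - 1)) / (1 - x) ^ 2) x :=
      (hasDerivAt_id x).div ((hasDerivAt_const x (1:ℝ)).sub (hasDerivAt_id x)) hx1
    have h2 : (1 * (1 - x) - x * (0 - 1)) / (1 - x) ^ 2 = f' x := by
      rw [hf']; field_simp; ring
    rw [h2] at this
    exact this.hasDerivWithinAt
  have hinj : InjOn f (Ioo (0:ℝ) 1) := by
    intro x hx y hy hxy
    have hx1 : 1 - x ≠ 0 := by have := hx.2; intro h; linarith [sub_eq_zero.mp h]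
    have hy1 : 1 - y ≠ 0 := by have := hy.2; intro h; linarith [sub_eq_zero.mp h]
    rw [hf] at hxy
    field_simp at hxy
    linarith [hxy]
  have himg : f '' (Ioo (0:ℝ) 1) = Ioi (0:ℝ) := by
    ext t
    constructor
    · rintro ⟨x, hx, rfl⟩
      exact mem_Ioi.mpr (div_pos hx.1 (by linarith [hx.2]))
    · intro ht
      have ht0 : (0:ℝ) < t := ht
      refine ⟨t / (1 + t), ⟨div_pos ht0 (by linarith), ?_⟩, ?_⟩
      · rw [div_lt_one (by linarith)]; linarith
      · rw [hf]
        have h1t : (1:ℝ) + t ≠ 0 := by positivity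
        field_simp
        ring
  rw [← himg, integral_image_eq_integral_abs_deriv_smul measurableSet_Ioo hderiv hinj,
    ← realBeta_Ioo ha hb]
  apply setIntegral_congr_fun measurableSet_Ioo
  intro x hx
  have hx0 : (0:ℝ) < x := hx.1
  have hc : (0:ℝ) < 1 - x := by linarith [hx.2]
  have habs : |f' x| = (1 - x) ^ ((-2 : ℝ)) := by
    show |((1 - x) ^ 2)⁻¹| = (1 - x) ^ ((-2:ℝ))
    rw [abs_of_nonneg (by positivity), ← Real.rpow_natCast (1 - x) 2,
      ← Real.rpow_neg hc.le]
    norm_num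
  have hfx : 1 + f x = (1 - x)⁻¹ := by
    show 1 + x / (1 - x) = (1 - x)⁻¹
    field_simp
    ring
  have hfx2 : f x = x * (1 - x)⁻¹ := by show x / (1 - x) = _; ring
  simp only [smul_eq_mul]
  rw [habs, hfx, hfx2]
  rw [Real.mul_rpow hx0.le (by positivity), ← Real.rpow_neg_one (1 - x),
    ← Real.rpow_mul hc.le, ← Real.rpow_mul hc.le]
  rw [show (-1 : ℝ) * (a - 1) = -(a-1) by ring, show (-1 : ℝ) * -(a+b) = a + b by ring]
  rw [show (1 - x) ^ ((-2:ℝ)) * (x ^ (a-1) * (1 - x) ^ (-(a-1)) * (1 - x) ^ (a+b)) =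
      x ^ (a-1) * ((1 - x) ^ ((-2:ℝ)) * (1 - x) ^ (-(a-1)) * (1 - x) ^ (a+b)) by ring]
  rw [← Real.rpow_add hc, ← Real.rpow_add hc]
  congr 1
  ring

set_option maxHeartbeats 1000000 in
lemma K_eq (N : ℕ) (hN : 0 < N) {s : ℝ} (hs0 : 0 < s) (hs1 : s < 1) :
    ∫ w in Ioi (0:ℝ), (1 - ((1 + w) ^ N)⁻¹) * w ^ (-1 - s) =
      1 / s * (Real.Gamma (1 - s) * Real.Gamma ((N : ℝ) + s) / Real.Gamma (N : ℝ)) := by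
  set u : ℝ → ℝ := fun w => 1 - ((1 + w) ^ N)⁻¹ with hu_def
  set u' : ℝ → ℝ := fun w => (N : ℝ) * ((1 + w) ^ (N + 1))⁻¹ with hu'_def
  set v : ℝ → ℝ := fun w => -(1 / s) * w ^ (-s) with hv_def
  set v' : ℝ → ℝ := fun w => w ^ (-1 - s) with hv'_def
  have hu : ∀ x ∈ Ioi (0:ℝ), HasDerivAt u (u' x) x := by
    intro x hx
    have hx0 : (0:ℝ) < x := hx
    have hb0 : (0:ℝ) < 1 + x := by linarith
    have h1 : HasDerivAt (fun w : ℝ => (1 + w) ^ N) ((N:ℝ) * (1 + x) ^ (N - 1) * 1) x :=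
      (((hasDerivAt_id x).const_add 1).pow N)
    have h2 := (h1.inv (by positivity)).const_sub 1
    convert h2 using 1
    · rfl
    · rfl
    · rfl
    rw [hu'_def]
    have hpow : (1 + x) ^ (N - 1) * (1 + x) ^ (N + 1) = ((1 + x) ^ N) ^ 2 := by
      rw [← pow_add, ← pow_mul]
      congr 1
      omega
    field_simp
    nlinarith [hpow]
  have hv : ∀ x ∈ Ioi (0:ℝ), HasDerivAt v (v' x) x := by
    intro x hx
    have hx0 : (0:ℝ) < x := hx
    have h1 : HasDerivAt (fun w : ℝ => w ^ (-s)) (-s * x ^ (-s - 1)) x :=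
      Real.hasDerivAt_rpow_const (Or.inl hx0.ne')
    have h2 := h1.const_mul (-(1 / s))
    convert h2 using 1
    · rfl
    · rfl
    rw [hv'_def]
    have : -s - 1 = -1 - s := by ring
    rw [this]
    field_simp
  have huv' : IntegrableOn (u * v') (Ioi (0:ℝ)) := K_integrableOn N hs0 hs1
  have hbeta_int := beta_integrableOn (a := 1 - s) (b := (N:ℝ) + s) (by linarith) (by positivity)
  have hbeta_eq : ∀ t ∈ Ioi (0:ℝ),
      t ^ ((1 - s) - 1) * (1 + t) ^ (-((1 - s) + ((N:ℝ) + s))) =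
      t ^ (-s) * ((1 + t) ^ (N + 1))⁻¹ := by
    intro t ht
    have ht0 : (0:ℝ) < t := ht
    congr 1
    · congr 1; ring
    · have hb0 : (0:ℝ) ≤ 1 + t := by linarith
      rw [← Real.rpow_natCast (1 + t) (N + 1), ← Real.rpow_neg hb0]
      congr 1
      push_cast
      ring
  have hu'v : IntegrableOn (u' * v) (Ioi (0:ℝ)) := by
    refine IntegrableOn.congr_fun (hbeta_int.const_mul (-((N:ℝ)/s))) (fun t ht => ?_)
      measurableSet_Ioi
    have ht0 : (0:ℝ) < t := ht
    show -((N:ℝ)/s) * (t ^ ((1 - s) - 1) * (1 + t) ^ (-((1 - s) + ((N:ℝ) + s)))) = u' t * v t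
    rw [hbeta_eq t ht, hu'_def, hv_def]
    field_simp
  have h_zero : Tendsto (u * v) (nhdsWithin 0 (Ioi 0)) (nhds 0) := by
    apply squeeze_zero_norm'
      (a := fun w : ℝ => ((N:ℝ) / s) * w ^ (1 - s))
    · filter_upwards [self_mem_nhdsWithin] with w hw
      have hw0 : (0:ℝ) < w := hw
      have h1 := aux_nonneg N hw0.le
      have h2 := aux_le_mul N hw0.le
      have hrp : (0:ℝ) ≤ w ^ (-s) := Real.rpow_nonneg hw0.le _
      show ‖u w * v w‖ ≤ _
      rw [Real.norm_eq_abs, hu_def, hv_def]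
      have habs : |(1 - ((1 + w) ^ N)⁻¹) * (-(1/s) * w ^ (-s))| =
          (1 - ((1 + w) ^ N)⁻¹) * ((1/s) * w ^ (-s)) := by
        rw [abs_mul, abs_of_nonneg h1, abs_mul, abs_neg, abs_of_nonneg (by positivity),
          abs_of_nonneg hrp]
      rw [habs]
      have hmul : w * w ^ (-s) = w ^ (1 - s) := by
        rw [show (1:ℝ) - s = 1 + (-s) by ring, Real.rpow_add hw0, Real.rpow_one]
      calc (1 - ((1 + w) ^ N)⁻¹) * ((1/s) * w ^ (-s))
          ≤ ((N:ℝ) * w) * ((1/s) * w ^ (-s)) := by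
            apply mul_le_mul_of_nonneg_right h2 (by positivity)
        _ = ((N:ℝ) / s) * w ^ (1 - s) := by
            rw [← hmul]; field_simp
    · have h3 : Tendsto (fun w : ℝ => w ^ (1 - s)) (nhdsWithin 0 (Ioi 0)) (nhds 0) := by
        have := (Real.continuousAt_rpow_const 0 (1 - s) (Or.inr (by linarith))).tendsto
        rw [Real.zero_rpow (by linarith : (1:ℝ) - s ≠ 0)] at this
        exact this.mono_left nhdsWithin_le_nhds
      have := h3.const_mul ((N:ℝ)/s)
      simpa using this
  have h_infty : Tendsto (u * v) atTop (nhds 0) := by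
    apply squeeze_zero_norm' (a := fun w : ℝ => (1 / s) * w ^ (-s))
    · filter_upwards [eventually_gt_atTop (0:ℝ)] with w hw0
      have h1 := aux_nonneg N hw0.le
      have h2 := aux_le_one N hw0.le
      have hrp : (0:ℝ) ≤ w ^ (-s) := Real.rpow_nonneg hw0.le _
      show ‖u w * v w‖ ≤ _
      rw [Real.norm_eq_abs, hu_def, hv_def]
      have habs : |(1 - ((1 + w) ^ N)⁻¹) * (-(1/s) * w ^ (-s))| =
          (1 - ((1 + w) ^ N)⁻¹) * ((1/s) * w ^ (-s)) := by
        rw [abs_mul, abs_of_nonneg h1, abs_mul, abs_neg, abs_of_nonneg (by positivity),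
          abs_of_nonneg hrp]
      rw [habs]
      nlinarith [mul_nonneg (le_of_lt (by positivity : (0:ℝ) < 1/s)) hrp]
    · have := (tendsto_rpow_neg_atTop hs0).const_mul (1/s)
      simpa using this
  have hibp := integral_Ioi_mul_deriv_eq_deriv_mul hu hv huv' hu'v h_zero h_infty
  have hbeta_val := beta_Ioi_eq (a := 1 - s) (b := (N:ℝ) + s) (by linarith) (by positivity)
  have hGamma1 : Real.Gamma ((1 - s) + ((N:ℝ) + s)) = (N:ℝ) * Real.Gamma (N:ℝ) := by
    rw [show (1 - s) + ((N:ℝ) + s) = (N:ℝ) + 1 by ring]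
    exact Real.Gamma_add_one (Nat.cast_ne_zero.mpr hN.ne')
  have hint_u'v : ∫ w in Ioi (0:ℝ), u' w * v w =
      -((N:ℝ)/s) * (Real.Gamma (1 - s) * Real.Gamma ((N:ℝ) + s) / ((N:ℝ) * Real.Gamma (N:ℝ))) := by
    rw [← hGamma1, ← hbeta_val, ← integral_const_mul]
    apply setIntegral_congr_fun measurableSet_Ioi
    intro t ht
    show u' t * v t = -((N:ℝ)/s) * (t ^ ((1 - s) - 1) * (1 + t) ^ (-((1 - s) + ((N:ℝ) + s))))
    rw [hbeta_eq t ht, hu'_def, hv_def]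
    field_simp
  have hNne : (N:ℝ) ≠ 0 := Nat.cast_ne_zero.mpr hN.ne'
  have hGne : Real.Gamma (N:ℝ) ≠ 0 :=
    (Real.Gamma_pos_of_pos (by exact_mod_cast hN)).ne'
  calc ∫ w in Ioi (0:ℝ), (1 - ((1 + w) ^ N)⁻¹) * w ^ (-1 - s)
      = ∫ w in Ioi (0:ℝ), u w * v' w := rfl
    _ = 0 - 0 - ∫ w in Ioi (0:ℝ), u' w * v w := hibp
    _ = 1 / s * (Real.Gamma (1 - s) * Real.Gamma ((N : ℝ) + s) / Real.Gamma (N : ℝ)) := by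
        rw [hint_u'v]
        field_simp
        ring

/-- For a positive integer `N`, real `α > 2` and `z > 0`, the improper
integral `∫₀^∞ (1 − (1 + z·v^{−α})^{−N}) v dv` converges and equals
`(z^{2/α}/2) · Γ(1 − 2/α)Γ(N + 2/α)/Γ(N)`. -/
theorem interference_tail_integral (N : ℕ) (hN : 0 < N) (α : ℝ) (hα : 2 < α)
    (z : ℝ) (hz : 0 < z) :
    IntegrableOn (fun v : ℝ => (1 - ((1 + z * v ^ (-α)) ^ N)⁻¹) * v) (Set.Ioi 0) volume ∧
    ∫ v in Set.Ioi (0 : ℝ), (1 - ((1 + z * v ^ (-α)) ^ N)⁻¹) * v =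
      z ^ (2 / α) / 2 *
        (Real.Gamma (1 - 2 / α) * Real.Gamma ((N : ℝ) + 2 / α) / Real.Gamma (N : ℝ)) := by
  refine ⟨main_integrableOn N hα hz, ?_⟩

  have hα0 : (0:ℝ) < α := by linarith
  set s : ℝ := 2 / α with hs_def
  have hs0 : 0 < s := by positivity
  have hs1 : s < 1 := by
    rw [hs_def, div_lt_one hα0]; linarith
  have hαs : α * s = 2 := by
    rw [hs_def]; field_simp
  set g : ℝ → ℝ := fun y => (1/α) * ((1 - ((1 + z * y) ^ N)⁻¹) * y ^ (-1 - s)) with hg_def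
  set c : ℝ := z ^ ((1:ℝ) + s) / α with hc_def
  set G : ℝ → ℝ := fun w => c * ((1 - ((1 + w) ^ N)⁻¹) * w ^ (-1 - s)) with hG_def
  -- Step 1
  have step1 : ∫ v in Set.Ioi (0 : ℝ), (1 - ((1 + z * v ^ (-α)) ^ N)⁻¹) * v =
      ∫ y in Ioi (0:ℝ), g y := by
    rw [← integral_comp_rpow_Ioi g (p := -α) (by simpa using hα0.ne')]
    apply setIntegral_congr_fun measurableSet_Ioi
    intro x hx
    have hx0 : (0:ℝ) < x := hx
    show (1 - ((1 + z * x ^ (-α)) ^ N)⁻¹) * x = (|(-α)| * x ^ (-α - 1)) • g (x ^ (-α))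
    rw [smul_eq_mul, hg_def]
    have habs : |(-α)| = α := by rw [abs_neg, abs_of_pos hα0]
    have hxa : (0:ℝ) < x ^ (-α) := Real.rpow_pos_of_pos hx0 _
    have hpow : (x ^ (-α)) ^ (-1 - s) = x ^ (α + 2) := by
      rw [← Real.rpow_mul hx0.le]
      congr 1
      have : -α * (-1 - s) = α + α * s := by ring
      rw [this, hαs]
    have hcomb : x ^ (-α - 1) * x ^ (α + 2) = x := by
      rw [← Real.rpow_add hx0]
      have : -α - 1 + (α + 2) = 1 := by ring
      rw [this, Real.rpow_one]
    simp only
    rw [habs, hpow]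
    field_simp
    linear_combination (1 - (1 + z * x ^ (-α)) ^ N) * hcomb
  -- Step 2
  have step2 : ∫ y in Ioi (0:ℝ), g y = z⁻¹ * ∫ w in Ioi (0:ℝ), G w := by
    have h := integral_comp_mul_left_Ioi G 0 hz
    rw [mul_zero] at h
    rw [smul_eq_mul] at h
    rw [← h]
    apply setIntegral_congr_fun measurableSet_Ioi
    intro y hy
    have hy0 : (0:ℝ) < y := hy
    show g y = G (z * y)
    rw [hg_def, hG_def, hc_def]
    simp only
    have hmul : (z * y) ^ (-1 - s) = z ^ (-1 - s) * y ^ (-1 - s) :=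
      Real.mul_rpow hz.le hy0.le
    rw [hmul]
    have hzz : z ^ ((1:ℝ) + s) * z ^ (-1 - s) = 1 := by
      rw [← Real.rpow_add hz]
      have : (1:ℝ) + s + (-1 - s) = 0 := by ring
      rw [this, Real.rpow_zero]
    linear_combination (-(1/α * ((1 - ((1 + z * y) ^ N)⁻¹) * y ^ (-1 - s)))) * hzz
  rw [step1, step2, hG_def]
  rw [integral_const_mul, K_eq N hN hs0 hs1, hc_def]
  have hzs : z⁻¹ * (z ^ ((1:ℝ) + s) / α) = z ^ s / α := by
    rw [Real.rpow_add hz, Real.rpow_one]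
    field_simp
  have hGpos : Real.Gamma (N:ℝ) ≠ 0 :=
    (Real.Gamma_pos_of_pos (by exact_mod_cast hN)).ne'
  have hz1 : z ^ ((1:ℝ) + s) = z * z ^ s := by
    rw [Real.rpow_add hz, Real.rpow_one]
  have key : 1 / s = α / 2 := by
    rw [div_eq_div_iff hs0.ne' two_ne_zero]; linarith [hαs]
  have hαα : α * α⁻¹ = 1 := mul_inv_cancel₀ hα0.ne'
  linear_combination
    (1 / s * (Real.Gamma (1 - s) * Real.Gamma ((N:ℝ) + s) / Real.Gamma (N:ℝ))) * hzs
    + ((Real.Gamma (1 - s) * Real.Gamma ((N:ℝ) + s) / Real.Gamma (N:ℝ)) * z ^ s / α) * key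
    + ((Real.Gamma (1 - s) * Real.Gamma ((N:ℝ) + s) / Real.Gamma (N:ℝ)) * z ^ s / 2) * hαα
end

section
/- Let N be a positive integer, let α > 2 be real, let r > 0, and let z satisfy 0 < z < r^α. Then ∫_r^∞ (1 − (1 + z·v^{−α})^{−N}) v dv = (r²/2)·(₂F₁(−2/α, N; 1 − 2/α; −z·r^{−α}) − 1). -/
open MeasureTheory Real

/-- The Gauss hypergeometric series `₂F₁(a, b; c; x) = Σ_{n} (a)_n (b)_n / (c)_n · x^n / n!`,
where `(q)_n` is the rising Pochhammer symbol. -/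
noncomputable def hyp2F1 (a b c x : ℝ) : ℝ :=
  ∑' n : ℕ,
    ((ascPochhammer ℝ n).eval a * (ascPochhammer ℝ n).eval b / (ascPochhammer ℝ n).eval c) *
      x ^ n / (n.factorial : ℝ)

/-- For a positive integer `N`, real `α > 2`, `r > 0` and `0 < z < r^α`,
`∫_r^∞ (1 − (1 + z·v^{−α})^{−N}) v dv = (r²/2)·(₂F₁(−2/α, N; 1 − 2/α; −z·r^{−α}) − 1)`. -/
theorem interference_hypergeometric_integral (N : ℕ) (hN : 0 < N) (α : ℝ) (hα : 2 < α)
    (r : ℝ) (hr : 0 < r) (z : ℝ) (hz0 : 0 < z) (hz : z < r ^ α) :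
    ∫ v in Set.Ioi r, (1 - ((1 + z * v ^ (-α)) ^ N)⁻¹) * v =
      r ^ 2 / 2 * (hyp2F1 (-2 / α) (N : ℝ) (1 - 2 / α) (-z * r ^ (-α)) - 1) := by
  obtain ⟨M, rfl⟩ : ∃ M, N = M + 1 := ⟨N - 1, (Nat.succ_pred_eq_of_pos hN).symm⟩
  have hα0 : (0:ℝ) < α := by linarith
  set x : ℝ := z * r ^ (-α) with hxdef
  have hx0 : 0 < x := mul_pos hz0 (rpow_pos_of_pos hr _)
  have hx1 : x < 1 := by
    rw [hxdef, Real.rpow_neg hr.le, ← div_eq_mul_inv, div_lt_one (rpow_pos_of_pos hr α)]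
    exact hz
  -- the terms of the expansion of the integrand
  set F : ℕ → ℝ → ℝ := fun n v =>
    -((((n + 1 + M).choose M : ℕ) : ℝ) * (-(z * v ^ (-α))) ^ (n + 1)) * v with hFdef
  set s : ℕ → ℝ := fun n => (-1) ^ n * (((n + 1 + M).choose M : ℕ) : ℝ) * z ^ (n + 1) with hsdef
  set e : ℕ → ℝ := fun n => 1 - α * (n + 1) with hedef
  have hen : ∀ n : ℕ, e n < -1 := by
    intro n
    have h1 : α * 1 ≤ α * ((n : ℝ) + 1) := by
      apply mul_le_mul_of_nonneg_left _ hα0.le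
      have : (0:ℝ) ≤ (n : ℝ) := Nat.cast_nonneg n
      linarith
    simp only [hedef]
    linarith
  have hen1 : ∀ n : ℕ, e n + 1 < 0 := fun n => by linarith [hen n]
  -- closed form of F on `Ioi r`
  have hFeq : ∀ n : ℕ, ∀ v ∈ Set.Ioi r, F n v = s n * v ^ (e n) := by
    intro n v hv
    have hv0 : 0 < v := hr.trans hv
    have h1 : (v ^ (-α)) ^ (n + 1) = v ^ (-(α * ((n:ℝ) + 1))) := by
      rw [← Real.rpow_natCast (v ^ (-α)) (n + 1), ← Real.rpow_mul hv0.le]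
      push_cast
      ring_nf
    have h2 : v ^ (-(α * ((n:ℝ) + 1))) * v = v ^ (e n) := by
      nth_rewrite 2 [← Real.rpow_one v]
      rw [← Real.rpow_add hv0]
      congr 1
      simp only [hedef]
      ring
    simp only [hFdef, hsdef]
    rw [neg_pow (z * v ^ (-α)), mul_pow z (v ^ (-α)), h1]
    rw [show -((((n + 1 + M).choose M : ℕ) : ℝ) * ((-1) ^ (n+1) * (z ^ (n+1) * v ^ (-(α * ((n:ℝ) + 1)))))) * v
        = ((-1) ^ n * (((n + 1 + M).choose M : ℕ) : ℝ) * z ^ (n+1)) * (v ^ (-(α * ((n:ℝ) + 1))) * v) by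
      rw [pow_succ]; ring]
    rw [h2]
  -- integrability and integral values
  have hInt : ∀ n : ℕ, IntegrableOn (F n) (Set.Ioi r) := by
    intro n
    have h0 : IntegrableOn (fun v : ℝ => s n * v ^ (e n)) (Set.Ioi r) :=
      (integrableOn_Ioi_rpow_of_lt (hen n) hr).const_mul (s n)
    exact MeasureTheory.IntegrableOn.congr_fun h0 (fun v hv => (hFeq n v hv).symm) measurableSet_Ioi
  have hIval : ∀ n : ℕ, ∫ v in Set.Ioi r, F n v = s n * (-r ^ (e n + 1) / (e n + 1)) := by
    intro n
    rw [setIntegral_congr_fun measurableSet_Ioi (hFeq n), integral_const_mul,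
      integral_Ioi_rpow_of_lt (hen n) hr]
  have hNval : ∀ n : ℕ, ∫ v in Set.Ioi r, ‖F n v‖ = |s n| * (-r ^ (e n + 1) / (e n + 1)) := by
    intro n
    have : Set.EqOn (fun v => ‖F n v‖) (fun v => |s n| * v ^ (e n)) (Set.Ioi r) := by
      intro v hv
      have hv0 : 0 < v := hr.trans hv
      simp only [Real.norm_eq_abs, hFeq n v hv, abs_mul,
        abs_of_pos (rpow_pos_of_pos hv0 (e n))]
    rw [setIntegral_congr_fun measurableSet_Ioi this, integral_const_mul,
      integral_Ioi_rpow_of_lt (hen n) hr]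
  -- the value of the elementary integral, in convenient form
  have hrval : ∀ n : ℕ, -r ^ (e n + 1) / (e n + 1) = r ^ 2 * (r ^ (-α)) ^ (n + 1) / (α * (n + 1) - 2) := by
    intro n
    have h1 : r ^ (e n + 1) = r ^ 2 * (r ^ (-α)) ^ (n + 1) := by
      have h2 : (r ^ (-α)) ^ (n + 1) = r ^ (-(α * ((n:ℝ) + 1))) := by
        rw [← Real.rpow_natCast (r ^ (-α)) (n + 1), ← Real.rpow_mul hr.le]
        push_cast
        ring_nf
      rw [h2, show (r:ℝ) ^ 2 = r ^ ((2:ℕ):ℝ) from (Real.rpow_natCast r 2).symm,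
        ← Real.rpow_add hr]
      congr 1
      simp only [hedef]
      push_cast
      ring
    rw [h1]
    have h3 : e n + 1 = -(α * ((n:ℝ) + 1) - 2) := by simp only [hedef]; push_cast; ring
    rw [h3, div_neg, neg_div, neg_neg]
  have hD : ∀ n : ℕ, 0 < α * ((n:ℝ) + 1) - 2 := by
    intro n
    have h1 : α * 1 ≤ α * ((n : ℝ) + 1) := by
      apply mul_le_mul_of_nonneg_left _ hα0.le
      have : (0:ℝ) ≤ (n : ℝ) := Nat.cast_nonneg n
      linarith
    linarith
  -- summability of the integrals of norms
  have hsummable_x : Summable (fun n : ℕ => (((n + 1 + M).choose M : ℕ) : ℝ) * x ^ (n + 1)) := by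
    have h0 : Summable (fun n : ℕ => (((n + M).choose M : ℕ) : ℝ) * x ^ n) := by
      exact summable_choose_mul_geometric_of_norm_lt_one M
        (by rw [Real.norm_eq_abs, abs_of_pos hx0]; exact hx1)
    have h1 := (summable_nat_add_iff
      (f := fun m : ℕ => (((m + M).choose M : ℕ) : ℝ) * x ^ m) 1).mpr h0
    exact h1
  have hsumnorm : Summable (fun n : ℕ => ∫ v in Set.Ioi r, ‖F n v‖) := by
    apply Summable.of_nonneg_of_le
      (fun n => by
        rw [hNval n]
        apply mul_nonneg (abs_nonneg _)
        rw [hrval n]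
        exact div_nonneg (mul_nonneg (pow_nonneg hr.le _)
          (pow_nonneg (Real.rpow_nonneg hr.le _) _)) (hD n).le)
      (fun n => ?_) ((hsummable_x.mul_left (r ^ 2 / (α - 2))))
    rw [hNval n, hrval n]
    have habs : |s n| = (((n + 1 + M).choose M : ℕ) : ℝ) * z ^ (n + 1) := by
      simp only [hsdef]
      rw [abs_mul, abs_mul, abs_pow, abs_neg, abs_one, one_pow, one_mul,
        Nat.abs_cast, abs_pow, abs_of_pos hz0]
    rw [habs]
    have hxpow : x ^ (n + 1) = z ^ (n + 1) * (r ^ (-α)) ^ (n + 1) := by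
      rw [hxdef, mul_pow]
    rw [hxpow]
    have h1 : (((n + 1 + M).choose M : ℕ) : ℝ) * z ^ (n + 1) * (r ^ 2 * (r ^ (-α)) ^ (n + 1) / (α * (↑n + 1) - 2))
        = ((((n + 1 + M).choose M : ℕ) : ℝ) * z ^ (n + 1) * (r ^ 2 * (r ^ (-α)) ^ (n + 1))) / (α * (↑n + 1) - 2) := by
      ring
    have h2 : r ^ 2 / (α - 2) * ((((n + 1 + M).choose M : ℕ) : ℝ) * (z ^ (n + 1) * (r ^ (-α)) ^ (n + 1)))
        = ((((n + 1 + M).choose M : ℕ) : ℝ) * z ^ (n + 1) * (r ^ 2 * (r ^ (-α)) ^ (n + 1))) / (α - 2) := by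
      ring
    rw [h1, h2]
    exact div_le_div_of_nonneg_left
      (mul_nonneg (mul_nonneg (Nat.cast_nonneg _) (pow_nonneg hz0.le _))
        (mul_nonneg (pow_nonneg hr.le _) (pow_nonneg (Real.rpow_nonneg hr.le _) _)))
      (by linarith)
      (by nlinarith [mul_nonneg hα0.le (Nat.cast_nonneg n : (0:ℝ) ≤ (n:ℝ))])
  -- pointwise expansion of the integrand
  have htsum : ∀ v ∈ Set.Ioi r, HasSum (fun n => F n v)
      ((1 - ((1 + z * v ^ (-α)) ^ (M + 1))⁻¹) * v) := by
    intro v hv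
    have hv0 : 0 < v := hr.trans hv
    have hw0 : 0 < z * v ^ (-α) := mul_pos hz0 (rpow_pos_of_pos hv0 _)
    have hw1 : z * v ^ (-α) < 1 := by
      have h6 : v ^ (-α) < r ^ (-α) := Real.rpow_lt_rpow_of_neg hr hv (by linarith)
      calc z * v ^ (-α) < z * r ^ (-α) := by exact mul_lt_mul_of_pos_left h6 hz0
        _ < 1 := hx1
    have h0 := hasSum_choose_mul_geometric_of_norm_lt_one (𝕜 := ℝ) M
      (r := -(z * v ^ (-α)))
      (by rw [norm_neg, Real.norm_eq_abs, abs_of_pos hw0]; exact hw1)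
    have h1 := (hasSum_nat_add_iff'
      (f := fun n : ℕ => (((n + M).choose M : ℕ) : ℝ) * (-(z * v ^ (-α))) ^ n) 1).mpr h0
    have h2 := (h1.neg).mul_right v
    have hval : -(1 / (1 - -(z * v ^ (-α))) ^ (M + 1) -
        ∑ i ∈ Finset.range 1, (((i + M).choose M : ℕ) : ℝ) * (-(z * v ^ (-α))) ^ i) * v
        = (1 - ((1 + z * v ^ (-α)) ^ (M + 1))⁻¹) * v := by
      rw [Finset.sum_range_one, sub_neg_eq_add, one_div]
      norm_num
    rw [← hval]
    exact h2
  -- interchange of sum and integral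
  have hinter := MeasureTheory.hasSum_integral_of_summable_integral_norm
    (μ := volume.restrict (Set.Ioi r)) (F := F) hInt hsumnorm
  have hLHS : ∫ v in Set.Ioi r, (1 - ((1 + z * v ^ (-α)) ^ (M + 1))⁻¹) * v
      = ∑' n : ℕ, ∫ v in Set.Ioi r, F n v := by
    have h5 : ∫ v in Set.Ioi r, (∑' n : ℕ, F n v)
        = ∫ v in Set.Ioi r, (1 - ((1 + z * v ^ (-α)) ^ (M + 1))⁻¹) * v :=
      setIntegral_congr_fun measurableSet_Ioi (fun v hv => (htsum v hv).tsum_eq)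
    rw [hinter.tsum_eq, h5]
  -- the hypergeometric coefficients
  set T : ℕ → ℝ := fun n =>
    ((ascPochhammer ℝ n).eval (-2 / α) * (ascPochhammer ℝ n).eval (((M + 1 : ℕ)) : ℝ) /
      (ascPochhammer ℝ n).eval (1 - 2 / α)) * (-z * r ^ (-α)) ^ n / (n.factorial : ℝ)
    with hTdef
  have hc2 : 2 / α < 1 := by rw [div_lt_one hα0]; exact hα
  have hcpos : (0:ℝ) < 1 - 2 / α := by linarith
  have hPa : ∀ n : ℕ, (ascPochhammer ℝ (n + 1)).eval (-2 / α)
      = (-2 / α) * (ascPochhammer ℝ n).eval (1 - 2 / α) := by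
    intro n
    rw [ascPochhammer_succ_left, Polynomial.eval_mul, Polynomial.eval_X, Polynomial.eval_comp,
      Polynomial.eval_add, Polynomial.eval_X, Polynomial.eval_one]
    have h9 : (-2 / α + 1 : ℝ) = 1 - 2 / α := by ring
    rw [h9]
  have hPN : ∀ n : ℕ, (ascPochhammer ℝ (n + 1)).eval (((M + 1 : ℕ)) : ℝ)
      = ((n + 1).factorial : ℝ) * (((n + 1 + M).choose M : ℕ) : ℝ) := by
    intro n
    rw [← Nat.cast_ascFactorial]
    norm_cast
    rw [Nat.ascFactorial_eq_factorial_mul_choose]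
    congr 1
    have h7 := Nat.choose_symm (Nat.le_add_left (n + 1) M)
    rw [Nat.add_sub_cancel] at h7
    rw [← h7]
    congr 1
    omega
  have hE : ∀ n : ℕ, r ^ 2 / 2 * T (n + 1) = ∫ v in Set.Ioi r, F n v := by
    intro n
    rw [hIval n, hrval n]
    simp only [hTdef]
    rw [hPa n, hPN n, ascPochhammer_succ_eval]
    have h8 : (-z * r ^ (-α)) ^ (n + 1) = (-1) ^ (n + 1) * (z ^ (n + 1) * (r ^ (-α)) ^ (n + 1)) := by
      rw [show -z * r ^ (-α) = -(z * r ^ (-α)) by ring, neg_pow, mul_pow]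
    rw [h8]
    simp only [hsdef]
    have hfac : ((n + 1).factorial : ℝ) ≠ 0 := Nat.cast_ne_zero.mpr (Nat.factorial_ne_zero _)
    have hPne : (ascPochhammer ℝ n).eval (1 - 2 / α) ≠ 0 := (ascPochhammer_pos n _ hcpos).ne'
    have hDne : α * ((n:ℝ) + 1) - 2 ≠ 0 := (hD n).ne'
    have hαne : α ≠ 0 := hα0.ne'
    have h9 : (1 - 2 / α) + (n:ℝ) = (α * ((n:ℝ) + 1) - 2) / α := by
      field_simp
      ring
    rw [h9]
    generalize (ascPochhammer ℝ n).eval (1 - 2 / α) = P at hPne ⊢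
    generalize hDd : α * ((n:ℝ) + 1) - 2 = D at hDne ⊢
    generalize (((n + 1 + M).choose M : ℕ) : ℝ) = K
    generalize ((n + 1).factorial : ℝ) = Fc at hfac ⊢
    generalize (r ^ (-α) : ℝ) ^ (n + 1) = R
    field_simp
    ring
  -- assembling everything
  have hsumI : Summable (fun n : ℕ => ∫ v in Set.Ioi r, F n v) := hinter.summable
  have hsumt1 : Summable (fun n : ℕ => T (n + 1)) := by
    refine (hsumI.mul_left (2 / r ^ 2)).congr (fun n => ?_)
    rw [← hE n]
    field_simp
  have hsumt : Summable T := (summable_nat_add_iff (f := T) 1).mp hsumt1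
  have ht0 : T 0 = 1 := by simp [hTdef]
  calc ∫ v in Set.Ioi r, (1 - ((1 + z * v ^ (-α)) ^ (M + 1))⁻¹) * v
      = ∑' n : ℕ, ∫ v in Set.Ioi r, F n v := hLHS
    _ = ∑' n : ℕ, r ^ 2 / 2 * T (n + 1) := (tsum_congr fun n => (hE n).symm)
    _ = r ^ 2 / 2 * ∑' n : ℕ, T (n + 1) := tsum_mul_left
    _ = r ^ 2 / 2 * (hyp2F1 (-2 / α) (((M + 1 : ℕ)) : ℝ) (1 - 2 / α) (-z * r ^ (-α)) - 1) := by
        have h10 : hyp2F1 (-2 / α) (((M + 1 : ℕ)) : ℝ) (1 - 2 / α) (-z * r ^ (-α))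
            = T 0 + ∑' n : ℕ, T (n + 1) := by
          simp only [hyp2F1]
          exact Summable.tsum_eq_zero_add hsumt
        rw [h10, ht0]
        ring
end

section
/- Let N be a positive integer, let c > 0 and R > 0. Then ∫₀^R (1 − (1 + c/v²)^{−N}) v dv = R²/2 + (c/2)·F_y(c/R²). -/
open MeasureTheory Real Finset

private lemma key_alg (N : ℕ) (hN : 0 < N) (c v t w S : ℝ) (ht0 : t ≠ 0) (hc : c ≠ 0)
    (hwv : w = v^2/t) (e4 : 1 - w = c/t)
    (hg : S * (w - 1) = w^(N-1) - 1) :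
    (1 - w^N) * v =
      2*v/2 - 1/2*(2*v*w^(N-1) + v^2*(↑(N-1)*w^(N-1-1)*(2*v*c/t^2))
        - ↑N*c*(2*v/t) + ↑N*c*(S*(2*v*c/t^2))) := by
  have e1 : w^(N-1)*w = w^N := by
    rw [← pow_succ]; congr 1; omega
  have e2 : (↑(N-1):ℝ)*w^(N-1-1)*w = (↑(N-1):ℝ)*w^(N-1) := by
    cases h : N-1 with
    | zero => simp
    | succ n => rw [Nat.succ_sub_one, pow_succ]; ring
  have e5 : v^2 = w*t := by rw [hwv]; field_simp
  have e6 : ((N-1 : ℕ):ℝ) = (N:ℝ) - 1 := by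
    have := Nat.cast_sub (show 1 ≤ N from hN) (R := ℝ); simpa using this
  have hS3 : S = (1 - w^(N-1)) * t / c := by
    have hwm1 : w - 1 = -(c/t) := by linarith
    rw [hwm1] at hg
    field_simp at hg ⊢
    linarith
  have hB : v^2*(↑(N-1)*w^(N-1-1)*(2*v*c/t^2)) = 2*v*c/t*(((N:ℝ)-1)*w^(N-1)) := by
    calc v^2*(↑(N-1)*w^(N-1-1)*(2*v*c/t^2))
        = (↑(N-1)*w^(N-1-1)*w) * (2*v*c*t/t^2) := by rw [e5]; ring
      _ = (↑(N-1)*w^(N-1)) * (2*v*c*t/t^2) := by rw [e2]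
      _ = 2*v*c/t*(((N:ℝ)-1)*w^(N-1)) := by rw [e6]; field_simp
  have hD : ↑N*c*(S*(2*v*c/t^2)) = 2*(N:ℝ)*v*c/t*(1 - w^(N-1)) := by
    rw [hS3]; field_simp
  rw [hB, hD]
  have hc2 : c = t - t*w := by
    have h5 : t * (1 - w) = t * (c/t) := by rw [e4]
    field_simp at h5; linarith
  rw [hc2]
  field_simp
  linear_combination v * e1

private lemma hasDerivAt_G (N : ℕ) (hN : 0 < N) (c : ℝ) (hc : 0 < c) (v : ℝ) :
    HasDerivAt (fun v : ℝ => v^2/2 - (1/2)*(v^2 * (1 - c/(v^2+c))^(N-1)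
      - (N:ℝ)*c*Real.log (v^2+c)
      + (N:ℝ)*c*∑ j ∈ Finset.Icc 1 (N-1), (1 - c/(v^2+c))^j / (j:ℝ)))
    ((1 - (v^2/(v^2+c))^N) * v) v := by
  have ht : (0:ℝ) < v^2+c := by positivity
  have ht0 : v^2+c ≠ 0 := ht.ne'
  have hc0 : c ≠ 0 := hc.ne'
  have hv2 : HasDerivAt (fun v:ℝ => v^2+c) (2*v) v := by
    simpa using ((hasDerivAt_pow 2 v).add_const c)
  have hw : HasDerivAt (fun v:ℝ => 1 - c/(v^2+c)) (2*v*c/(v^2+c)^2) v := by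
    have h := ((hasDerivAt_const v c).div hv2 ht0).const_sub 1
    refine h.congr_deriv ?_
    ring
  have hvsq : HasDerivAt (fun v:ℝ => v^2) (2*v) v := by
    simpa using hasDerivAt_pow 2 v
  have hA := hvsq.mul (hw.pow (N-1))
  have hL := (hv2.log ht0).const_mul ((N:ℝ)*c)
  have hS : HasDerivAt (fun v:ℝ => ∑ j ∈ Finset.Icc 1 (N-1), (1 - c/(v^2+c))^j / (j:ℝ))
      (∑ j ∈ Finset.Icc 1 (N-1), ((j:ℝ)*(1-c/(v^2+c))^(j-1)*(2*v*c/(v^2+c)^2))/(j:ℝ)) v := by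
    apply HasDerivAt.fun_sum
    intro j hj
    exact (hw.pow j).div_const (j:ℝ)
  have hG := (hvsq.div_const 2).sub ((((hA.sub hL).add (hS.const_mul ((N:ℝ)*c))).const_mul (1/2)))
  refine hG.congr_deriv ?_
  symm
  have hvw : v^2/(v^2+c) = 1 - c/(v^2+c) := by field_simp; ring
  rw [hvw]
  have hsum0 : ∀ j ∈ Finset.Icc 1 (N-1),
      ((j:ℝ)*(1 - c/(v^2+c))^(j-1)*(2*v*c/(v^2+c)^2))/(j:ℝ)
      = (1 - c/(v^2+c))^(j-1)*(2*v*c/(v^2+c)^2) := by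
    intro j hj
    have hj1 : (1:ℕ) ≤ j := (Finset.mem_Icc.mp hj).1
    have hjne : (j:ℝ) ≠ 0 := Nat.cast_ne_zero.mpr (by omega)
    field_simp
  rw [Finset.sum_congr rfl hsum0, ← Finset.sum_mul]
  have hre : ∑ j ∈ Finset.Icc 1 (N-1), (1 - c/(v^2+c))^(j-1)
      = ∑ i ∈ Finset.range (N-1), (1 - c/(v^2+c))^i := by
    rw [show Finset.Icc 1 (N-1) = Finset.Ico 1 N by rw [← Finset.Ico_add_one_right_eq_Icc]; congr 1; omega]
    rw [Finset.sum_Ico_eq_sum_range]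
    simp
  rw [hre]
  exact key_alg N hN c v (v^2+c) _ _ ht0 hc0 (by field_simp; ring) (by ring)
    (geom_sum_mul _ _)

/-- The auxiliary function `F_y` of Lemma 1 (case α = 2) of the paper:
`F_y(y) = N·ln(1 + 1/y) − 1/(y(1+y)^{N−1}) − Σ_{m=1}^{N−1} N/((1+y)^{N−m}(N−m))`. -/
noncomputable def Fy (N : ℕ) (y : ℝ) : ℝ :=
  (N : ℝ) * Real.log (1 + 1 / y) - 1 / (y * (1 + y) ^ (N - 1)) -
    ∑ m ∈ Finset.Icc 1 (N - 1), (N : ℝ) / ((1 + y) ^ (N - m) * ((N - m : ℕ) : ℝ))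

/-- For a positive integer `N`, `c > 0` and `R > 0`,
`∫₀^R (1 − (1 + c/v²)^{−N}) v dv = R²/2 + (c/2)·F_y(c/R²)`. -/
theorem interference_ball_integral (N : ℕ) (hN : 0 < N) (c R : ℝ) (hc : 0 < c) (hR : 0 < R) :
    ∫ v in (0 : ℝ)..R, (1 - ((1 + c / v ^ 2) ^ N)⁻¹) * v = R ^ 2 / 2 + c / 2 * Fy N (c / R ^ 2) := by
  have hc0 : c ≠ 0 := hc.ne'
  have hR0 : R ≠ 0 := hR.ne'
  have hfg : ∀ v : ℝ, (1 - ((1 + c / v ^ 2) ^ N)⁻¹) * v = (1 - (v^2/(v^2+c))^N) * v := by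
    intro v
    rcases eq_or_ne v 0 with rfl | hv
    · norm_num
    · have hv2 : (v:ℝ)^2 ≠ 0 := pow_ne_zero 2 hv
      have ht0 : v^2 + c ≠ 0 := by positivity
      have h1 : 1 + c/v^2 = (v^2+c)/v^2 := by field_simp
      rw [h1, ← inv_pow, inv_div]
  simp only [hfg]
  have hcont : Continuous (fun v : ℝ => (1 - (v^2/(v^2+c))^N) * v) := by
    have h : ∀ v:ℝ, v^2 + c ≠ 0 := fun v => by positivity
    exact ((continuous_const.sub (((continuous_pow 2).div (by continuity) h).pow N)).mul
      continuous_id)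
  rw [intervalIntegral.integral_eq_sub_of_hasDerivAt (fun x _ => hasDerivAt_G N hN c hc x)
    (hcont.intervalIntegrable 0 R)]
  have ht : (0:ℝ) < R^2 + c := by positivity
  have ht0 : R^2 + c ≠ 0 := ht.ne'
  have hw' : (1:ℝ) - c/(R^2+c) = R^2/(R^2+c) := by field_simp; ring
  have hw0 : (1:ℝ) - c/(R^2+c) ≠ 0 := by rw [hw']; positivity
  have hG0 : (0:ℝ)^2/2 - (1/2)*((0:ℝ)^2 * (1 - c/((0:ℝ)^2+c))^(N-1)
      - (N:ℝ)*c*Real.log ((0:ℝ)^2+c)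
      + (N:ℝ)*c*∑ j ∈ Finset.Icc 1 (N-1), (1 - c/((0:ℝ)^2+c))^j / (j:ℝ))
      = (N:ℝ)*c*Real.log c/2 := by
    have hs : ∑ j ∈ Finset.Icc 1 (N-1), ((1:ℝ) - c/((0:ℝ)^2+c))^j / (j:ℝ) = 0 := by
      apply Finset.sum_eq_zero
      intro j hj
      have hj1 : (1:ℕ) ≤ j := (Finset.mem_Icc.mp hj).1
      rw [show (1:ℝ) - c/((0:ℝ)^2+c) = 0 by rw [zero_pow (by norm_num), zero_add, div_self hc0]; ring]
      rw [zero_pow (by omega), zero_div]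
    rw [hs]
    norm_num
    ring
  rw [hG0]
  unfold Fy
  have hlog : Real.log (1 + 1/(c/R^2)) = Real.log (R^2+c) - Real.log c := by
    rw [show (1:ℝ) + 1/(c/R^2) = (R^2+c)/c by field_simp; ring]
    exact Real.log_div ht0 hc0
  have hpinv : (1:ℝ) + c/R^2 = ((1:ℝ) - c/(R^2+c))⁻¹ := by
    rw [hw', inv_div]
    field_simp
  have h2 : 1/((c/R^2) * (1+c/R^2)^(N-1)) = R^2 * (1 - c/(R^2+c))^(N-1) / c := by
    rw [hpinv, inv_pow]
    have hp0 : ((1:ℝ) - c/(R^2+c))^(N-1) ≠ 0 := pow_ne_zero _ hw0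
    field_simp
  have h3 : ∑ m ∈ Finset.Icc 1 (N-1), (N:ℝ)/((1+c/R^2)^(N-m) * ((N-m : ℕ):ℝ))
      = ∑ j ∈ Finset.Icc 1 (N-1), (N:ℝ) * ((1:ℝ) - c/(R^2+c))^j / (j:ℝ) := by
    apply Finset.sum_nbij' (i := fun m => N - m) (j := fun m => N - m)
    · intro a ha; simp only [Finset.mem_Icc] at *; omega
    · intro a ha; simp only [Finset.mem_Icc] at *; omega
    · intro a ha; simp only [Finset.mem_Icc] at *; omega
    · intro a ha; simp only [Finset.mem_Icc] at *; omega
    · intro a ha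
      simp only [Finset.mem_Icc] at ha
      rw [hpinv, inv_pow]
      have hp0 : ((1:ℝ) - c/(R^2+c))^(N-a) ≠ 0 := pow_ne_zero _ hw0
      have hna : ((N - a : ℕ):ℝ) ≠ 0 := Nat.cast_ne_zero.mpr (by omega)
      field_simp
  rw [hlog, h2, h3]
  have h4 : ∑ j ∈ Finset.Icc 1 (N-1), (N:ℝ) * ((1:ℝ) - c/(R^2+c))^j / (j:ℝ)
      = (N:ℝ) * ∑ j ∈ Finset.Icc 1 (N-1), ((1:ℝ) - c/(R^2+c))^j / (j:ℝ) := by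
    rw [Finset.mul_sum]
    exact Finset.sum_congr rfl fun j _ => by ring
  rw [h4]
  field_simp
  ring
end

section
/- Let N be a positive integer, let c > 0, and let 0 < r < R. Then ∫_r^R (1 − (1 + c/v²)^{−N}) v dv = (R² − r²)/2 + (c/2)·(F_y(c/R²) − F_y(c/r²)). -/
open MeasureTheory Real Finset

lemma geo (t : ℝ) (n : ℕ) :
    (∑ k ∈ Finset.range n, t ^ (k + 2)) * (1 - t) = t ^ 2 - t ^ (n + 2) := by
  induction n with
  | zero => simp
  | succ n ih =>
    rw [Finset.sum_range_succ, add_mul, ih]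
    ring

lemma Fy_eq (N : ℕ) : Fy N = fun y =>
    (N : ℝ) * Real.log (1 + 1 / y) - 1 / (y * (1 + y) ^ (N - 1)) -
      ∑ k ∈ Finset.range (N - 1), (N : ℝ) / ((1 + y) ^ (k + 1) * ((k:ℝ) + 1)) := by
  funext y
  unfold Fy
  congr 1
  rw [← Finset.Ico_add_one_right_eq_Icc, Finset.sum_Ico_eq_sum_range]
  rw [show N - 1 + 1 - 1 = N - 1 from by omega]
  rw [← Finset.sum_range_reflect]
  refine Finset.sum_congr rfl fun i hi => ?_
  simp only [Finset.mem_range] at hi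
  rw [show N - (1 + (N - 1 - 1 - i)) = i + 1 from by omega]
  push_cast
  ring_nf

lemma Fy_hasDerivAt (N : ℕ) (hN : 0 < N) (y : ℝ) (hy : 0 < y) :
    HasDerivAt (Fy N) (1 / (y ^ 2 * (1 + y) ^ N)) y := by
  obtain ⟨n, rfl⟩ : ∃ n, N = n + 1 := ⟨N - 1, by omega⟩
  have hx : (0:ℝ) < 1 + y := by linarith
  have hxne : (1 + y) ≠ 0 := hx.ne'
  have h1y : (0:ℝ) < 1 + 1 / y := by positivity
  rw [Fy_eq]
  simp only [Nat.add_sub_cancel, Nat.cast_add, Nat.cast_one]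
  -- derivative of log part
  have h0 : HasDerivAt (fun y : ℝ => 1 + 1 / y) (-(y ^ 2)⁻¹) y := by
    simpa [one_div] using (hasDerivAt_inv hy.ne').const_add (1:ℝ)
  have hA : HasDerivAt (fun y : ℝ => ((n:ℝ)+1) * Real.log (1 + 1 / y))
      (((n:ℝ)+1) * (-(y ^ 2)⁻¹ / (1 + 1 / y))) y := (h0.log h1y.ne').const_mul _
  -- derivative of 1/(y (1+y)^n)
  have hd : HasDerivAt (fun y : ℝ => y * (1 + y) ^ n)
      (1 * (1 + y) ^ n + y * ((n:ℝ) * (1 + y) ^ (n - 1) * 1)) y :=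
    (hasDerivAt_id y).mul (((hasDerivAt_id y).const_add 1).pow n)
  have hdne : y * (1 + y) ^ n ≠ 0 := by positivity
  have hB : HasDerivAt (fun y : ℝ => 1 / (y * (1 + y) ^ n))
      (-(1 * (1 + y) ^ n + y * ((n:ℝ) * (1 + y) ^ (n - 1) * 1)) / (y * (1 + y) ^ n) ^ 2) y := by
    simpa [one_div] using hd.fun_inv hdne
  -- derivative of the sum
  have hS : HasDerivAt (fun y : ℝ => ∑ k ∈ Finset.range n, ((n:ℝ)+1) / ((1 + y) ^ (k + 1) * ((k:ℝ) + 1)))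
      (∑ k ∈ Finset.range n, -(((n:ℝ)+1) * (((1+y)⁻¹) ^ (k + 2))) ) y := by
    apply HasDerivAt.fun_sum
    intro k hk
    have hdk : HasDerivAt (fun y : ℝ => (1 + y) ^ (k + 1) * ((k:ℝ) + 1))
        ((((k:ℝ)+1) * (1 + y) ^ k * 1) * ((k:ℝ) + 1)) y := by
      have := (((hasDerivAt_id y).const_add (1:ℝ)).pow (k+1)).mul_const ((k:ℝ) + 1)
      simpa using this
    have hdkne : (1 + y) ^ (k + 1) * ((k:ℝ) + 1) ≠ 0 := by positivity
    have := (hasDerivAt_const y (((n:ℝ)+1))).div hdk hdkne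
    refine this.congr_deriv (Eq.symm ?_)
    simp only [inv_pow]
    field_simp
    ring
  have hT := (hA.sub hB).sub hS
  refine hT.congr_deriv (Eq.symm ?_)
  -- algebra
  have h1t : 1 - (1+y)⁻¹ ≠ 0 := by
    have h2 : (1+y)⁻¹ < 1 := by
      rw [inv_lt_one_iff₀]; right; linarith
    linarith
  have hsum : (∑ k ∈ Finset.range n, ((1+y)⁻¹) ^ (k + 2))
      = (((1+y)⁻¹) ^ 2 - ((1+y)⁻¹) ^ (n + 2)) / (1 - (1+y)⁻¹) := by
    rw [eq_div_iff h1t]; exact geo _ n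
  have hB' : -(1 * (1 + y) ^ n + y * ((n:ℝ) * (1 + y) ^ (n - 1) * 1)) / (y * (1 + y) ^ n) ^ 2
      = -(1 / (y ^ 2 * (1 + y) ^ n) + (n:ℝ) / (y * ((1 + y) ^ n * (1 + y)))) := by
    cases n with
    | zero => simp [neg_div, one_div]
    | succ m =>
      simp only [Nat.add_sub_cancel]
      have hp : (0:ℝ) < (1+y)^m := pow_pos hx m
      field_simp
      ring
  rw [Finset.sum_neg_distrib, ← Finset.mul_sum, hsum, hB']
  have hP : (0:ℝ) < (1+y)^n := pow_pos hx n
  simp only [pow_succ, inv_pow, pow_zero]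
  have hy0 : y ≠ 0 := hy.ne'
  field_simp
  ring_nf
  field_simp
  ring

/-- For a positive integer `N`, `c > 0` and `0 < r < R`,
`∫_r^R (1 − (1 + c/v²)^{−N}) v dv = (R² − r²)/2 + (c/2)·(F_y(c/R²) − F_y(c/r²))`. -/
theorem interference_annulus_integral (N : ℕ) (hN : 0 < N) (c r R : ℝ)
    (hc : 0 < c) (hr : 0 < r) (hrR : r < R) :
    ∫ v in r..R, (1 - ((1 + c / v ^ 2) ^ N)⁻¹) * v =
      (R ^ 2 - r ^ 2) / 2 + c / 2 * (Fy N (c / R ^ 2) - Fy N (c / r ^ 2)) := by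
  have hderiv : ∀ v ∈ Set.uIcc r R,
      HasDerivAt (fun v => v ^ 2 / 2 + c / 2 * Fy N (c / v ^ 2))
        ((1 - ((1 + c / v ^ 2) ^ N)⁻¹) * v) v := by
    intro v hv
    rw [Set.uIcc_of_le hrR.le] at hv
    have hv0 : 0 < v := lt_of_lt_of_le hr hv.1
    have hv2 : (0:ℝ) < v ^ 2 := by positivity
    have hy : 0 < c / v ^ 2 := by positivity
    have h1 : HasDerivAt (fun v : ℝ => v ^ 2) (2 * v) v := by
      simpa using hasDerivAt_pow 2 v
    have h2 : HasDerivAt (fun v : ℝ => c / v ^ 2) (c * (-(2 * v) / (v ^ 2) ^ 2)) v := by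
      simpa [div_eq_mul_inv] using (h1.inv hv2.ne').const_mul c
    have h3 := ((Fy_hasDerivAt N hN _ hy).comp v h2).const_mul (c / 2)
    have h4 := (h1.div_const 2).add h3
    refine h4.congr_deriv (Eq.symm ?_)
    have hw : (0:ℝ) < 1 + c / v ^ 2 := by positivity
    have hwN : (0:ℝ) < (1 + c / v ^ 2) ^ N := pow_pos hw N
    field_simp
    ring
  have hcont : IntervalIntegrable (fun v => (1 - ((1 + c / v ^ 2) ^ N)⁻¹) * v)
      MeasureTheory.volume r R := by
    apply ContinuousOn.intervalIntegrable
    apply ContinuousOn.mul _ continuousOn_id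
    apply ContinuousOn.sub continuousOn_const
    apply ContinuousOn.inv₀
    · apply ContinuousOn.pow
      exact continuousOn_const.add (continuousOn_const.div (continuousOn_pow 2)
        (fun v hv => by
          rw [Set.uIcc_of_le hrR.le] at hv
          have : 0 < v := lt_of_lt_of_le hr hv.1
          positivity))
    · intro v hv
      rw [Set.uIcc_of_le hrR.le] at hv
      have : 0 < v := lt_of_lt_of_le hr hv.1
      positivity
  rw [intervalIntegral.integral_eq_sub_of_hasDerivAt hderiv hcont]
  ring
end

section
/- Let α > 2 be real and let p ∈ (0,1]. Define, for 0 < τ < 1, S⁰(τ) = ₂F₁(−2/α, 1; 1 − 2/α; −τ), S¹(τ) = ₂F₁(1 − 2/α, 2; 2 − 2/α; −τ), Δ(τ) = Γ(1 − 2/α)Γ(1 + 2/α)·τ^{2/α}, and Λ(τ) = (2/α)Γ(1 − 2/α)Γ(1 + 2/α)·τ^{2/α − 1}. Then for every τ ∈ (0,1) with p·S⁰(τ) + (1 − p)·Δ(τ) ≠ 0, the function P(τ) = p/(p·S⁰(τ) + (1 − p)·Δ(τ)) is differentiable at τ and −P'(τ) = (2p²·S¹(τ) + (α − 2)(p − p²)·Λ(τ))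 / ((α − 2)·(p·S⁰(τ) + (1 − p)·Δ(τ))²). -/
open MeasureTheory Real

/-- `S⁰(τ) = ₂F₁(−2/α, 1; 1 − 2/α; −τ)`. -/
noncomputable def S0 (α τ : ℝ) : ℝ := hyp2F1 (-2 / α) 1 (1 - 2 / α) (-τ)

/-- `S¹(τ) = ₂F₁(1 − 2/α, 2; 2 − 2/α; −τ)`. -/
noncomputable def S1 (α τ : ℝ) : ℝ := hyp2F1 (1 - 2 / α) 2 (2 - 2 / α) (-τ)

/-- `Δ(τ) = Γ(1 − 2/α)Γ(1 + 2/α)·τ^{2/α}`. -/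
noncomputable def Dlt (α τ : ℝ) : ℝ :=
  Real.Gamma (1 - 2 / α) * Real.Gamma (1 + 2 / α) * τ ^ (2 / α)

/-- `Λ(τ) = (2/α)Γ(1 − 2/α)Γ(1 + 2/α)·τ^{2/α − 1}`. -/
noncomputable def Lmb (α τ : ℝ) : ℝ :=
  2 / α * (Real.Gamma (1 - 2 / α) * Real.Gamma (1 + 2 / α)) * τ ^ (2 / α - 1)

private lemma pochA (θ : ℝ) : ∀ n : ℕ,
    (ascPochhammer ℝ n).eval (-θ) * ((n : ℝ) - θ) = -θ * (ascPochhammer ℝ n).eval (1 - θ)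
  | 0 => by simp
  | n + 1 => by
    rw [ascPochhammer_succ_eval, ascPochhammer_succ_eval]
    push_cast
    linear_combination ((n : ℝ) + 1 - θ) * pochA θ n

private lemma pochB (θ : ℝ) : ∀ n : ℕ,
    (ascPochhammer ℝ n).eval (1 - θ) * ((n : ℝ) + 1 - θ) = (1 - θ) * (ascPochhammer ℝ n).eval (2 - θ)
  | 0 => by simp [mul_comm]
  | n + 1 => by
    rw [ascPochhammer_succ_eval, ascPochhammer_succ_eval]
    push_cast
    linear_combination ((n : ℝ) + 2 - θ) * pochB θ n

private lemma nsubθ_ne (θ : ℝ) (hθ : 0 < θ) (hθ1 : θ < 1) (n : ℕ) : ((n : ℝ) - θ) ≠ 0 := by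
  rcases n with _ | m
  · simpa using hθ.ne'
  · have h1 : (1 : ℝ) ≤ ((m + 1 : ℕ) : ℝ) := by
      exact_mod_cast Nat.one_le_iff_ne_zero.2 (Nat.succ_ne_zero m)
    nlinarith

private lemma term0 (θ : ℝ) (hθ : 0 < θ) (hθ1 : θ < 1) (n : ℕ) (x : ℝ) :
    ((ascPochhammer ℝ n).eval (-θ) * (ascPochhammer ℝ n).eval 1 /
      (ascPochhammer ℝ n).eval (1 - θ)) * x ^ n / (n.factorial : ℝ)
      = (-θ / ((n : ℝ) - θ)) * x ^ n := by
  have hC : (0:ℝ) < (ascPochhammer ℝ n).eval (1 - θ) := ascPochhammer_pos n _ (by linarith)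
  have hne := nsubθ_ne θ hθ hθ1 n
  have hfac : ((n.factorial : ℝ)) ≠ 0 := by positivity
  rw [ascPochhammer_eval_one]
  field_simp
  linear_combination (x ^ n) * pochA θ n

private lemma term1 (θ : ℝ) (hθ : 0 < θ) (hθ1 : θ < 1) (n : ℕ) (x : ℝ) :
    ((ascPochhammer ℝ n).eval (1 - θ) * (ascPochhammer ℝ n).eval 2 /
      (ascPochhammer ℝ n).eval (2 - θ)) * x ^ n / (n.factorial : ℝ)
      = ((1 - θ) * ((n : ℝ) + 1) / ((n : ℝ) + 1 - θ)) * x ^ n := by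
  have hC : (0:ℝ) < (ascPochhammer ℝ n).eval (2 - θ) := ascPochhammer_pos n _ (by linarith)
  have hne : ((n : ℝ) + 1 - θ) ≠ 0 := by
    have : (0:ℝ) ≤ (n : ℝ) := Nat.cast_nonneg n
    nlinarith
  have h2 : (ascPochhammer ℝ n).eval 2 = (((n + 1).factorial : ℕ) : ℝ) := by
    have h := factorial_mul_ascPochhammer ℝ 1 n
    norm_num at h
    rw [add_comm 1 n] at h
    exact_mod_cast h
  have hfacs : (((n+1).factorial : ℕ) : ℝ) = ((n:ℝ) + 1) * (n.factorial : ℝ) := by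
    push_cast [Nat.factorial_succ]; ring
  have hfac : ((n.factorial : ℝ)) ≠ 0 := by positivity
  rw [h2, hfacs]
  field_simp
  linear_combination (x ^ n) * pochB θ n

private lemma S0_hasDerivAt (α : ℝ) (hα : 2 < α) (τ : ℝ) (hτ : τ ∈ Set.Ioo (0:ℝ) 1) :
    HasDerivAt (fun t => S0 α t) (2 / (α - 2) * S1 α τ) τ := by
  obtain ⟨hτ0, hτ1⟩ := hτ
  have hα0 : (0:ℝ) < α := by linarith
  set θ : ℝ := 2 / α with hθdef
  have hθ : 0 < θ := by positivity
  have hθ1 : θ < 1 := by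
    rw [hθdef, div_lt_one hα0]; linarith
  -- closed form for S0 and S1
  have hS0eq : ∀ t : ℝ, S0 α t = ∑' n : ℕ, (-θ / ((n : ℝ) - θ)) * (-t) ^ n := by
    intro t
    have : (-2 : ℝ) / α = -θ := by rw [hθdef]; ring
    rw [S0, hyp2F1, this]
    exact tsum_congr fun n => term0 θ hθ hθ1 n (-t)
  have hS1eq : S1 α τ = ∑' n : ℕ, ((1 - θ) * ((n : ℝ) + 1) / ((n : ℝ) + 1 - θ)) * (-τ) ^ n := by
    rw [S1, hyp2F1]
    exact tsum_congr fun n => term1 θ hθ hθ1 n (-τ)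
  set g : ℕ → ℝ → ℝ := fun n t => (-θ / ((n : ℝ) - θ)) * (-t) ^ n with hg
  set g' : ℕ → ℝ → ℝ := fun n t => (-θ / ((n : ℝ) - θ)) * (((n : ℝ) * (-t) ^ (n - 1)) * (-1))
    with hg'
  set r : ℝ := (1 + τ) / 2 with hrdef
  have hr0 : 0 < r := by rw [hrdef]; linarith
  have hr1 : r < 1 := by rw [hrdef]; linarith
  have hτr : τ < r := by rw [hrdef]; linarith
  set u : ℕ → ℝ := fun n => (θ / (1 - θ)) * ((n : ℝ) * r ^ (n - 1)) with hu
  have husum : Summable u := by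
    apply Summable.mul_left
    rw [← summable_nat_add_iff 1]
    have h1 : Summable (fun n : ℕ => (n : ℝ) ^ 1 * r ^ n) :=
      summable_pow_mul_geometric_of_norm_lt_one 1 (by rwa [Real.norm_eq_abs, abs_of_pos hr0])
    have h2 : Summable (fun n : ℕ => r ^ n) := summable_geometric_of_lt_one hr0.le hr1
    refine (h1.add h2).congr fun n => ?_
    push_cast
    simp [pow_succ]
    ring
  have hderiv : ∀ n : ℕ, ∀ y : ℝ, y ∈ Set.Ioo (-r) r → HasDerivAt (g n) (g' n y) y := by
    intro n y _
    exact ((hasDerivAt_pow n (-y)).comp y (hasDerivAt_neg y)).const_mul _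
  have hbound : ∀ n : ℕ, ∀ y : ℝ, y ∈ Set.Ioo (-r) r → ‖g' n y‖ ≤ u n := by
    intro n y hy
    have hyr : |y| < r := abs_lt.2 ⟨hy.1, hy.2⟩
    rcases n with _ | m
    · simp [hg', hu]
    · have hm0 : (0:ℝ) ≤ (m : ℝ) := Nat.cast_nonneg m
      have hd : (0:ℝ) < (m : ℝ) + 1 - θ := by nlinarith
      have h1θ : (0:ℝ) < 1 - θ := by linarith
      rw [hg', hu]
      simp only [Nat.cast_succ, Nat.add_sub_cancel]
      rw [norm_mul, norm_mul, norm_mul]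
      simp only [norm_neg, norm_one, mul_one, Real.norm_eq_abs]
      rw [abs_div, abs_neg, abs_of_pos hθ, abs_of_pos hd, abs_of_nonneg (by positivity : (0:ℝ) ≤ (m:ℝ)+1),
        abs_pow, abs_neg]
      have e1 : θ / ((m:ℝ) + 1 - θ) ≤ θ / (1 - θ) :=
        div_le_div_of_nonneg_left hθ.le h1θ (by linarith) |>.trans_eq rfl
      have e2 : |y| ^ m ≤ r ^ m := pow_le_pow_left₀ (abs_nonneg y) hyr.le m
      calc θ / ((m:ℝ) + 1 - θ) * (((m:ℝ)+1) * |y| ^ m)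
          ≤ θ / (1 - θ) * (((m:ℝ)+1) * r ^ m) := by
            apply mul_le_mul e1 (by nlinarith) (by positivity) (by positivity)
        _ = θ / (1 - θ) * (((m:ℝ)+1) * r ^ m) := rfl
  have hcoefb : ∀ n : ℕ, |(-θ / ((n:ℝ) - θ))| ≤ 1 / (1 - θ) := by
    intro n
    have h1θ : (0:ℝ) < 1 - θ := by linarith
    rcases n with _ | m
    · rw [abs_div]
      simp only [Nat.cast_zero, zero_sub, abs_neg, abs_of_pos hθ]
      rw [div_self hθ.ne']
      rw [le_div_iff₀ h1θ]; linarith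
    · have hm0 : (0:ℝ) ≤ (m : ℝ) := Nat.cast_nonneg m
      have hd : (0:ℝ) < ((m+1 : ℕ):ℝ) - θ := by push_cast; nlinarith
      rw [abs_div, abs_neg, abs_of_pos hθ, abs_of_pos hd, div_le_div_iff₀ hd h1θ]
      push_cast
      nlinarith
  have hτmem : τ ∈ Set.Ioo (-r) r := ⟨by linarith, hτr⟩
  have hg0sum : Summable (fun n => g n τ) := by
    apply Summable.of_norm_bounded
      ((summable_geometric_of_lt_one hr0.le hr1).mul_left _)
    intro n
    rw [hg, norm_mul, Real.norm_eq_abs, Real.norm_eq_abs, abs_pow, abs_neg]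
    have : |τ| ^ n ≤ r ^ n := pow_le_pow_left₀ (abs_nonneg τ) (by rw [abs_of_pos hτ0]; linarith) n
    have hb := hcoefb n
    have h1θ : (0:ℝ) < 1 - θ := by linarith
    apply mul_le_mul hb this (by positivity) (by positivity)
  have key : HasDerivAt (fun z => ∑' n : ℕ, g n z) (∑' n : ℕ, g' n τ) τ :=
    hasDerivAt_tsum_of_isPreconnected husum isOpen_Ioo isPreconnected_Ioo
      hderiv hbound hτmem hg0sum hτmem
  have hsum' : Summable (fun n => g' n τ) :=
    Summable.of_norm_bounded husum fun n => hbound n τ hτmem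
  have hval : (∑' n : ℕ, g' n τ) = 2 / (α - 2) * S1 α τ := by
    rw [hsum'.tsum_eq_zero_add]
    have hz : g' 0 τ = 0 := by simp [hg']
    rw [hz, zero_add, hS1eq, ← tsum_mul_left]
    apply tsum_congr
    intro m
    have hm0 : (0:ℝ) ≤ (m : ℝ) := Nat.cast_nonneg m
    have hd : ((m:ℝ) + 1 - θ) ≠ 0 := by nlinarith
    have hα2 : α - 2 ≠ 0 := by linarith
    have hkey : 2 / (α - 2) * (1 - θ) = θ := by
      rw [hθdef]; field_simp
    rw [hg']
    push_cast
    try simp only [Nat.add_sub_cancel]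
    linear_combination (-(((m:ℝ)+1) * (-τ)^m / ((m:ℝ)+1-θ))) * hkey
  rw [← hval]
  exact key.congr_of_eventuallyEq (Filter.Eventually.of_forall hS0eq)

/-- (Corollary 5.) Let `α > 2` and `p ∈ (0,1]`. For every `τ ∈ (0,1)` with
`p·S⁰(τ) + (1 − p)·Δ(τ) ≠ 0`, the function `P(τ) = p/(p·S⁰(τ) + (1 − p)·Δ(τ))` is
differentiable at `τ` and
`−P'(τ) = (2p²·S¹(τ) + (α − 2)(p − p²)·Λ(τ)) / ((α − 2)·(p·S⁰(τ) + (1 − p)·Δ(τ))²)`. -/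
theorem coverage_density_closed_form (α : ℝ) (hα : 2 < α) (p : ℝ) (hp : p ∈ Set.Ioc (0 : ℝ) 1) :
    ∀ τ ∈ Set.Ioo (0 : ℝ) 1, p * S0 α τ + (1 - p) * Dlt α τ ≠ 0 →
      HasDerivAt (fun τ : ℝ => p / (p * S0 α τ + (1 - p) * Dlt α τ))
        (-((2 * p ^ 2 * S1 α τ + (α - 2) * (p - p ^ 2) * Lmb α τ) /
            ((α - 2) * (p * S0 α τ + (1 - p) * Dlt α τ) ^ 2))) τ := by
  intro τ hτ hD
  have hα0 : (0:ℝ) < α := by linarith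
  have hα2 : α - 2 ≠ 0 := by intro h; linarith [sub_eq_zero.mp h]
  have hS0d := S0_hasDerivAt α hα τ hτ
  set K : ℝ := Real.Gamma (1 - 2 / α) * Real.Gamma (1 + 2 / α) with hK
  have hDltd : HasDerivAt (fun t => Dlt α t) (K * (2 / α * τ ^ (2 / α - 1))) τ := by
    have := (Real.hasDerivAt_rpow_const (p := 2 / α) (Or.inl hτ.1.ne')).const_mul K
    simpa [Dlt, hK, mul_comm, mul_assoc, mul_left_comm] using this
  have hDd : HasDerivAt (fun t => p * S0 α t + (1 - p) * Dlt α t)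
      (p * (2 / (α - 2) * S1 α τ) + (1 - p) * (K * (2 / α * τ ^ (2 / α - 1)))) τ :=
    (hS0d.const_mul p).add (hDltd.const_mul (1 - p))
  have hP : HasDerivAt (fun t => p / (p * S0 α t + (1 - p) * Dlt α t)) _ τ :=
    (hasDerivAt_const τ p).div hDd hD
  convert hP using 1
  rw [Lmb, hK]
  have h2 : (p * S0 α τ + (1 - p) * Dlt α τ) ^ 2 ≠ 0 := pow_ne_zero 2 hD
  field_simp
  ring
end
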